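/- With Γ₁, Γ₂, Δ, M, 𝓔 as above, the functor from commutative rings to abelian groups A ↦ Z¹(Γ₁, Hom(M, A^×)) is represented by the group algebra ℤ[(𝓔 ⊗ M)_Δ]: for every commutative ring A there is a bijection, natural in A, between ring homomorphisms ℤ[(𝓔 ⊗ M)_Δ] → A and 1-cocycles Γ₁ → Hom(M, A^×), where Γ₁ acts on the multiplicative group Hom(M, A^×) by (γ·f)(m) = f(π(γ)^{-1}·m). -/

import Mathlib

/-!
STATEMENT 10.  The functor A ↦ Z¹(Γ₁, Hom(M, A^×)) on commutative rings is
represented by the group algebra ℤ[(𝓔 ⊗ M)_Δ]: there is a bijection, natural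
in A, between ring homomorphisms ℤ[(𝓔 ⊗ M)_Δ] → A and 1-cocycles
Γ₁ → Hom(M, A^×) (Γ₁ acting by (γ·f)(m) = f(π(γ)⁻¹·m)).
-/

open scoped TensorProduct

section EModule

variable {Γ₁ Δ : Type} [Group Γ₁] [Group Δ]

/-- The augmentation map `ℤ[Δ] → ℤ` (sum of coefficients), with `ℤ[Δ]`
realized as `Δ →₀ ℤ`. -/
noncomputable def augmentation (Δ : Type) : (Δ →₀ ℤ) →+ ℤ :=
  Finsupp.liftAddHom fun _ => AddMonoidHom.id ℤ

/-- The augmentation ideal `I_Δ ⊆ ℤ[Δ]`, as an additive subgroup. -/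
noncomputable def augIdeal (Δ : Type) : AddSubgroup (Δ →₀ ℤ) := (augmentation Δ).ker

/-- The element `c − 1` of `I_Δ`. -/
noncomputable def aidElt [Group Δ] (c : Δ) : ↥(augIdeal Δ) :=
  ⟨Finsupp.single c 1 - Finsupp.single 1 1, by
    simp [augIdeal, AddMonoidHom.mem_ker, map_sub, augmentation,
      Finsupp.liftAddHom_apply_single]⟩

/-- The element `a − b` of `I_Δ`. -/
noncomputable def aidElt2 [Group Δ] (a b : Δ) : ↥(augIdeal Δ) :=
  ⟨Finsupp.single a 1 - Finsupp.single b 1, by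
    simp [augIdeal, AddMonoidHom.mem_ker, map_sub, augmentation,
      Finsupp.liftAddHom_apply_single]⟩

/-- The underlying abelian group `Γ₂^{ab} ⊕ I_Δ` of the ℤ[Δ]-module 𝓔
(with `Γ₂ = ker π` and `Γ₂^{ab}` its abelianization, written additively). -/
abbrev EMod (π : Γ₁ →* Δ) : Type :=
  Additive (Abelianization ↥π.ker) × ↥(augIdeal Δ)

/-- The Δ-action `d·[k] = [σ(d) k σ(d)⁻¹]` on `Γ₂^{ab}` (conjugation uses
normality of `Γ₂ = ker π`). -/
noncomputable def conjAb (π : Γ₁ →* Δ) (σ : Δ → Γ₁) (d : Δ) :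
    Abelianization ↥π.ker →* Abelianization ↥π.ker :=
  Abelianization.map (MulAut.conjNormal (σ d)).toMonoidHom

/-- The 2-cocycle `κ(d,c) = [σ(d)σ(c)σ(dc)⁻¹] ∈ Γ₂^{ab}`. -/
noncomputable def kappaE (π : Γ₁ →* Δ) (σ : Δ → Γ₁) (hσ : ∀ c, π (σ c) = c)
    (d c : Δ) : Abelianization ↥π.ker :=
  Abelianization.of ⟨σ d * σ c * (σ (d * c))⁻¹, by
    have : π (σ d * σ c * (σ (d * c))⁻¹) = 1 := by
      rw [map_mul, map_mul, map_inv, hσ, hσ, hσ, mul_inv_cancel]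
    simpa [MonoidHom.mem_ker] using this⟩

/-- The defining formula of the Δ-action on `𝓔 = Γ₂^{ab} ⊕ I_Δ`:
`d ∗ (g, c−1) = (d·g + κ(d,c), dc − d)`, extended ℤ-linearly.  (The elements
`(g, c−1)` generate `𝓔`, so this determines the action.) -/
def EActionFormula (π : Γ₁ →* Δ) (σ : Δ → Γ₁) (hσ : ∀ c, π (σ c) = c)
    [DistribMulAction Δ (EMod π)] : Prop :=
  ∀ (d : Δ) (g : Abelianization ↥π.ker) (c : Δ),
    d • ((Additive.ofMul g, aidElt c) : EMod π) =
      (Additive.ofMul (conjAb π σ d g * kappaE π σ hσ d c), aidElt2 (d * c) d)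

variable (M : Type) [AddCommGroup M] [DistribMulAction Δ M]

/-- `T = 𝓔 ⊗ M`. -/
abbrev TMod (π : Γ₁ →* Δ) : Type := (EMod π) ⊗[ℤ] M

/-- The diagonal action of `d ∈ Δ` on `𝓔 ⊗ M`. -/
noncomputable def diagT (π : Γ₁ →* Δ) [DistribMulAction Δ (EMod π)] (d : Δ) :
    TMod M π →ₗ[ℤ] TMod M π :=
  TensorProduct.map ((DistribMulAction.toAddMonoidHom (EMod π) d).toIntLinearMap)
    ((DistribMulAction.toAddMonoidHom M d).toIntLinearMap)

/-- The subgroup of `𝓔 ⊗ M` generated by the elements `d•t − t`. -/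
noncomputable def coinvKerT (π : Γ₁ →* Δ) [DistribMulAction Δ (EMod π)] :
    AddSubgroup (TMod M π) :=
  AddSubgroup.closure {x | ∃ (d : Δ) (t : TMod M π), x = diagT M π d t - t}

/-- The Δ-coinvariants `(𝓔 ⊗ M)_Δ`. -/
abbrev CoinvT (π : Γ₁ →* Δ) [DistribMulAction Δ (EMod π)] : Type :=
  TMod M π ⧸ coinvKerT M π

/-- 1-cocycles `Z¹(Γ₁, Hom(M,V))`, where `Γ₁` acts on `Hom(M,V)` by
`(γ·f)(m) = f(π(γ)⁻¹·m)`. -/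
noncomputable def ZOneM (π : Γ₁ →* Δ) (V : Type) [AddCommGroup V] :
    AddSubgroup (Γ₁ → (M →+ V)) where
  carrier := {Φ | ∀ (g h : Γ₁) (m : M), Φ (g * h) m = Φ g m + Φ h ((π g)⁻¹ • m)}
  zero_mem' := by intro g h m; simp
  add_mem' := by
    intro Φ Ψ hΦ hΨ g h m
    simp only [Pi.add_apply, AddMonoidHom.add_apply, hΦ g h m, hΨ g h m]
    abel
  neg_mem' := by
    intro Φ hΦ g h m
    simp only [Pi.neg_apply, AddMonoidHom.neg_apply, hΦ g h m]
    abel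

/-- The subgroup `I_Δ·M ⊆ M` generated by the elements `c•m − m`. -/
noncomputable def idealSMulM : AddSubgroup M :=
  AddSubgroup.closure {x : M | ∃ (c : Δ) (m : M), x = c • m - m}

/-- First differential `(Γ₁ →₀ M) → M`, `[g]⊗m ↦ π(g)•m − m`, of the complex
computing `H_1(Γ₁, M)` (with `Γ₁` acting on `M` through `π`). -/
noncomputable def dOne (π : Γ₁ →* Δ) : (Γ₁ →₀ M) →+ M :=
  Finsupp.liftAddHom fun g =>
    DistribMulAction.toAddMonoidHom M (π g) - AddMonoidHom.id M

/-- Second differential `(Γ₁×Γ₁ →₀ M) → (Γ₁ →₀ M)`,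
`[g|h]⊗m ↦ [h]⊗m − [gh]⊗m + [g]⊗(π(h)•m)`. -/
noncomputable def dTwo (π : Γ₁ →* Δ) : ((Γ₁ × Γ₁) →₀ M) →+ (Γ₁ →₀ M) :=
  Finsupp.liftAddHom fun p =>
    (Finsupp.singleAddHom p.2 - Finsupp.singleAddHom (p.1 * p.2)
      + (Finsupp.singleAddHom p.1).comp (DistribMulAction.toAddMonoidHom M (π p.2)) :
        M →+ (Γ₁ →₀ M))

/-- The group homology `H_1(Γ₁, M)` (action of `Γ₁` on `M` through `π`). -/
abbrev HOne (π : Γ₁ →* Δ) : Type :=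
  ↥(dOne M π).ker ⧸ ((dTwo M π).range.addSubgroupOf (dOne M π).ker)

end EModule


section Statement10

variable {Γ₁ Δ : Type} [Group Γ₁] [Group Δ]

/-- Multiplicative 1-cocycles `Γ₁ → Hom(M, A^×)`, written as functions
`Γ₁ → M → Aˣ` which are homomorphisms in `M` and satisfy the cocycle
identity `Φ(gh)(m) = Φ(g)(m) · Φ(h)(π(g)⁻¹•m)`. -/
def ZOneUnits (M : Type) [AddCommGroup M] [DistribMulAction Δ M]
    (π : Γ₁ →* Δ) (A : Type) [CommRing A] : Type :=
  {Φ : Γ₁ → M → Aˣ //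
    (∀ (g : Γ₁) (m m' : M), Φ g (m + m') = Φ g m * Φ g m') ∧
    (∀ (g h : Γ₁) (m : M), Φ (g * h) m = Φ g m * Φ h ((π g)⁻¹ • m))}


/-!
Ring homs `ℤ[W] → A` are homs `W → Aˣ`, so it suffices to show that additive homs
`(𝓔 ⊗ M)_Δ → V` correspond to 1-cocycles `Γ₁ → Hom(M, V)` for every abelian group `V`.
The map `c(γ) = ([γ σ(π γ)⁻¹], π γ − 1)` is a 1-cocycle `Γ₁ → 𝓔` (this is what the formula
for the action on `𝓔` is made for) whose values generate `𝓔`. Hence `γ ↦ (m ↦ [c(γ) ⊗ m])`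
is a cocycle with values in `Hom(M, (𝓔 ⊗ M)_Δ)`, and composing with it is injective.
Conversely a cocycle `Φ` defines `ε : 𝓔 → Hom(M, V)`, `[k] ↦ Φ(k)` on `Γ₂^{ab}` and
`c − 1 ↦ Φ(σ c)` on `I_Δ`, with `ε ∘ c = Φ`; since `d • c(γ) = c(σ(d) γ) − c(σ(d))`, the
cocycle identity of `Φ` makes `ε` equivariant, so `ε` descends to the coinvariants.
-/

open AddSubgroup

noncomputable def groupAlgebraRingHomEquiv (W A : Type) [AddCommGroup W] [CommRing A] :
    (AddMonoidAlgebra ℤ W →+* A) ≃ (W →+ Additive Aˣ) :=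
  (RingHom.equivIntAlgHom _ _).trans <| (AddMonoidAlgebra.lift ℤ A W).symm.trans <|
    MonoidHom.toHomUnitsMulEquiv.toEquiv.trans AddMonoidHom.toMultiplicativeLeft.symm

lemma aidElt_one : aidElt (1 : Δ) = 0 :=
  Subtype.ext (sub_self _)

omit [Group Δ] in
lemma augmentation_apply (f : Δ →₀ ℤ) : augmentation Δ f = f.sum fun _ n => n :=
  Finsupp.liftAddHom_apply _ _

lemma eq_sum_aidElt (x : augIdeal Δ) :
    x = (x : Δ →₀ ℤ).sum fun c n => n • aidElt c := by
  apply Subtype.ext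
  have hx : ∑ c ∈ (x : Δ →₀ ℤ).support, (x : Δ →₀ ℤ) c = 0 :=
    (augmentation_apply _).symm.trans x.2
  simp only [Finsupp.sum, AddSubgroup.val_finsetSum, AddSubgroup.coe_zsmul, aidElt, smul_sub,
    Finset.sum_sub_distrib, Finsupp.smul_single, smul_eq_mul, mul_one, ← Finsupp.single_finsetSum,
    hx, Finsupp.single_zero, sub_zero]
  exact (Finsupp.sum_single _).symm

lemma closure_range_aidElt : closure (Set.range (aidElt (Δ := Δ))) = ⊤ := by
  refine eq_top_iff.2 fun x _ => ?_
  rw [eq_sum_aidElt x]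
  exact sum_mem fun c _ => zsmul_mem (subset_closure (Set.mem_range_self c)) _

section CanonicalCocycle

variable (π : Γ₁ →* Δ) (σ : Δ → Γ₁) (hσ : ∀ c, π (σ c) = c)

def kerPart (γ : Γ₁) : π.ker :=
  ⟨γ * (σ (π γ))⁻¹, by simp [MonoidHom.mem_ker, hσ]⟩

lemma kerPart_of_mem_ker (hσ1 : σ 1 = 1) (k : π.ker) : kerPart π σ hσ k = k :=
  Subtype.ext <| by simp [kerPart, MonoidHom.mem_ker.1 k.2, hσ1]

lemma kerPart_sigma (c : Δ) : kerPart π σ hσ (σ c) = 1 :=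
  Subtype.ext <| by simp [kerPart, hσ]

noncomputable def canonicalCocycle (γ : Γ₁) : EMod π :=
  (Additive.ofMul (Abelianization.of (kerPart π σ hσ γ)), aidElt (π γ))

lemma canonicalCocycle_of_mem_ker (hσ1 : σ 1 = 1) (k : π.ker) :
    canonicalCocycle π σ hσ k = (Additive.ofMul (Abelianization.of k), 0) := by
  rw [canonicalCocycle, kerPart_of_mem_ker π σ hσ hσ1, k.2, aidElt_one]

lemma canonicalCocycle_sigma (c : Δ) : canonicalCocycle π σ hσ (σ c) = (0, aidElt c) := by
  rw [canonicalCocycle, kerPart_sigma, hσ, map_one, ofMul_one]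

lemma closure_range_canonicalCocycle (hσ1 : σ 1 = 1) :
    closure (Set.range (canonicalCocycle π σ hσ)) = ⊤ := by
  set S := closure (Set.range (canonicalCocycle π σ hσ))
  have hfst (a : Additive (Abelianization π.ker)) : ((a, 0) : EMod π) ∈ S := by
    obtain ⟨k, hk⟩ : ∃ k, Abelianization.of k = a.toMul := QuotientGroup.mk_surjective _
    rw [← ofMul_toMul a, ← hk, ← canonicalCocycle_of_mem_ker π σ hσ hσ1]
    exact subset_closure (Set.mem_range_self _)
  have hsnd : closure (Set.range (aidElt (Δ := Δ))) ≤ S.comap (AddMonoidHom.inr _ _) := by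
    rw [closure_le]
    rintro _ ⟨c, rfl⟩
    rw [SetLike.mem_coe, mem_comap, AddMonoidHom.inr_apply, ← canonicalCocycle_sigma π σ hσ]
    exact subset_closure (Set.mem_range_self _)
  rw [closure_range_aidElt] at hsnd
  refine eq_top_iff.2 fun ⟨a, x⟩ _ => ?_
  simpa using add_mem (hfst a) (hsnd (mem_top x))

lemma canonicalCocycle_mul [DistribMulAction Δ (EMod π)] (hE : EActionFormula π σ hσ)
    (g h : Γ₁) :
    canonicalCocycle π σ hσ (g * h) =
      canonicalCocycle π σ hσ g + π g • canonicalCocycle π σ hσ h := by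
  rw [canonicalCocycle, canonicalCocycle, canonicalCocycle, hE, Prod.mk_add_mk, ← ofMul_mul,
    conjAb, Abelianization.map_of, kappaE, ← map_mul, ← map_mul]
  refine Prod.ext (congrArg (Additive.ofMul ∘ Abelianization.of) (Subtype.ext ?_))
    (Subtype.ext ?_)
  · simp only [kerPart, Subgroup.coe_mul, MulEquiv.coe_toMonoidHom, MulAut.conjNormal_apply,
      map_mul]
    group
  · simp only [aidElt, aidElt2, AddSubgroup.coe_add, map_mul]
    abel

end CanonicalCocycle

namespace ZOneM

variable {M : Type} [AddCommGroup M] [DistribMulAction Δ M] {π : Γ₁ →* Δ} {V : Type}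
  [AddCommGroup V]

lemma comp_mem {W : Type} [AddCommGroup W] {Φ : Γ₁ → M →+ V} (hΦ : Φ ∈ ZOneM M π V)
    (ψ : V →+ W) : (fun g => ψ.comp (Φ g)) ∈ ZOneM M π W := fun g h m => by
  simp only [AddMonoidHom.comp_apply, hΦ g h m, map_add]

lemma apply_mul_of_mem_ker (Φ : ZOneM M π V) {x : Γ₁} (hx : π x = 1) (y : Γ₁) :
    Φ.1 (x * y) = Φ.1 x + Φ.1 y :=
  AddMonoidHom.ext fun m => by rw [Φ.2 x y m, hx, inv_one, one_smul, AddMonoidHom.add_apply]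

lemma apply_one (Φ : ZOneM M π V) : Φ.1 1 = 0 := by
  simpa using apply_mul_of_mem_ker Φ (map_one π) 1

def restrictKer (Φ : ZOneM M π V) : π.ker →* Multiplicative (M →+ V) :=
  MonoidHom.mk' (fun k => Multiplicative.ofAdd (Φ.1 k)) fun k k' =>
    congrArg Multiplicative.ofAdd (apply_mul_of_mem_ker Φ k.2 k')

end ZOneM

section Coinvariants

variable (π : Γ₁ →* Δ) (σ : Δ → Γ₁) (hσ : ∀ c, π (σ c) = c)
  (M : Type) [AddCommGroup M] [DistribMulAction Δ M] [DistribMulAction Δ (EMod π)]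

lemma diagT_tmul (d : Δ) (e : EMod π) (m : M) : diagT M π d (e ⊗ₜ m) = (d • e) ⊗ₜ (d • m) :=
  rfl

lemma CoinvT.mk_diagT (d : Δ) (t : TMod M π) :
    (QuotientAddGroup.mk (diagT M π d t) : CoinvT M π) = QuotientAddGroup.mk t :=
  QuotientAddGroup.eq_iff_sub_mem.2 (subset_closure ⟨d, t, rfl⟩)

noncomputable def univCocycle (γ : Γ₁) : M →+ CoinvT M π :=
  (QuotientAddGroup.mk' _).comp
    (TensorProduct.mk ℤ _ M (canonicalCocycle π σ hσ γ)).toAddMonoidHom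

lemma univCocycle_mem (hE : EActionFormula π σ hσ) :
    univCocycle π σ hσ M ∈ ZOneM M π (CoinvT M π) := fun g h m => by
  have hdiag : (π g • canonicalCocycle π σ hσ h) ⊗ₜ[ℤ] m =
      diagT M π (π g) (canonicalCocycle π σ hσ h ⊗ₜ ((π g)⁻¹ • m)) := by
    rw [diagT_tmul, smul_inv_smul]
  simp only [univCocycle, AddMonoidHom.comp_apply, LinearMap.toAddMonoidHom_coe,
    TensorProduct.mk_apply, QuotientAddGroup.mk'_apply, canonicalCocycle_mul π σ hσ hE,
    TensorProduct.add_tmul, hdiag, QuotientAddGroup.mk_add, CoinvT.mk_diagT]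

lemma CoinvT.addMonoidHom_ext (hσ1 : σ 1 = 1) {V : Type} [AddCommGroup V]
    {ψ₁ ψ₂ : CoinvT M π →+ V}
    (h : ∀ γ, ψ₁.comp (univCocycle π σ hσ M γ) = ψ₂.comp (univCocycle π σ hσ M γ)) :
    ψ₁ = ψ₂ := by
  refine QuotientAddGroup.addMonoidHom_ext _ <| AddMonoidHom.toIntLinearMap_injective <|
    TensorProduct.ext' fun e m => ?_
  have hm := AddMonoidHom.eq_of_eqOn_dense (closure_range_canonicalCocycle π σ hσ hσ1)
    (f := (ψ₁.comp (QuotientAddGroup.mk' _)).comp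
      ((TensorProduct.mk ℤ (EMod π) M).flip m).toAddMonoidHom)
    (g := (ψ₂.comp (QuotientAddGroup.mk' _)).comp
      ((TensorProduct.mk ℤ (EMod π) M).flip m).toAddMonoidHom)
    (by rintro _ ⟨γ, rfl⟩; exact DFunLike.congr_fun (h γ) m)
  exact DFunLike.congr_fun hm e

end Coinvariants

namespace ZOneM

variable {π : Γ₁ →* Δ} (σ : Δ → Γ₁) {M : Type} [AddCommGroup M] [DistribMulAction Δ M]
  {V : Type} [AddCommGroup V] (Φ : ZOneM M π V)

noncomputable def liftEMod : EMod π →+ (M →+ V) :=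
  (MonoidHom.toAdditiveLeft (Abelianization.lift (restrictKer Φ))).coprod
    ((Finsupp.linearCombination ℤ fun c => Φ.1 (σ c)).toAddMonoidHom.comp (augIdeal Δ).subtype)

lemma liftEMod_canonicalCocycle (hσ : ∀ c, π (σ c) = c) (hσ1 : σ 1 = 1) (γ : Γ₁) :
    liftEMod σ Φ (canonicalCocycle π σ hσ γ) = Φ.1 γ := by
  have hsplit : γ = kerPart π σ hσ γ * σ (π γ) := by simp [kerPart]
  conv_rhs => rw [hsplit, apply_mul_of_mem_ker Φ (kerPart π σ hσ γ).2]
  simp [liftEMod, canonicalCocycle, aidElt, restrictKer, hσ1, apply_one]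

variable [DistribMulAction Δ (EMod π)]

lemma liftEMod_smul (hσ : ∀ c, π (σ c) = c) (hσ1 : σ 1 = 1) (hE : EActionFormula π σ hσ)
    (d : Δ) (e : EMod π) (m : M) :
    liftEMod σ Φ (d • e) (d • m) = liftEMod σ Φ e m := by
  have hgen := AddMonoidHom.eq_of_eqOn_dense (closure_range_canonicalCocycle π σ hσ hσ1)
    (f := ((liftEMod σ Φ).flip (d • m)).comp (DistribSMul.toAddMonoidHom (EMod π) d))
    (g := (liftEMod σ Φ).flip m) <| by
    rintro _ ⟨γ, rfl⟩
    have hsmul := canonicalCocycle_mul π σ hσ hE (σ d) γ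
    rw [hσ, ← sub_eq_iff_eq_add'] at hsmul
    simp only [AddMonoidHom.comp_apply, DistribSMul.toAddMonoidHom_apply, AddMonoidHom.flip_apply,
      ← hsmul, map_sub, liftEMod_canonicalCocycle σ Φ hσ hσ1]
    rw [Φ.2, hσ, inv_smul_smul, add_sub_cancel_left]
  exact DFunLike.congr_fun hgen e

noncomputable def liftTMod : TMod M π →+ V :=
  TensorProduct.liftAddHom (liftEMod σ Φ) fun r e m => by simp

lemma liftTMod_diagT (hσ : ∀ c, π (σ c) = c) (hσ1 : σ 1 = 1) (hE : EActionFormula π σ hσ)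
    (d : Δ) (t : TMod M π) :
    liftTMod σ Φ (diagT M π d t) = liftTMod σ Φ t := by
  induction t using TensorProduct.induction_on with
  | zero => simp
  | tmul e m => exact liftEMod_smul σ Φ hσ hσ1 hE d e m
  | add x y hx hy => simp only [map_add, hx, hy]

noncomputable def liftCoinv (hσ : ∀ c, π (σ c) = c) (hσ1 : σ 1 = 1)
    (hE : EActionFormula π σ hσ) : CoinvT M π →+ V :=
  QuotientAddGroup.lift _ (liftTMod σ Φ) <| (AddSubgroup.closure_le _).2 <| by
    rintro _ ⟨d, t, rfl⟩
    rw [SetLike.mem_coe, AddMonoidHom.mem_ker, map_sub, liftTMod_diagT σ Φ hσ hσ1 hE, sub_self]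

lemma liftCoinv_comp_univCocycle (hσ : ∀ c, π (σ c) = c) (hσ1 : σ 1 = 1)
    (hE : EActionFormula π σ hσ) (γ : Γ₁) :
    (liftCoinv σ Φ hσ hσ1 hE).comp (univCocycle π σ hσ M γ) = Φ.1 γ :=
  AddMonoidHom.ext fun m => DFunLike.congr_fun (liftEMod_canonicalCocycle σ Φ hσ hσ1 γ) m

end ZOneM

noncomputable def CoinvT.addMonoidHomEquivZOneM (π : Γ₁ →* Δ) (σ : Δ → Γ₁)
    (hσ : ∀ c, π (σ c) = c) (hσ1 : σ 1 = 1) [DistribMulAction Δ (EMod π)] (hE : EActionFormula π σ hσ)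
    (M : Type) [AddCommGroup M] [DistribMulAction Δ M] (V : Type) [AddCommGroup V] :
    (CoinvT M π →+ V) ≃ ZOneM M π V where
  toFun ψ :=
    ⟨fun γ => ψ.comp (univCocycle π σ hσ M γ), ZOneM.comp_mem (univCocycle_mem π σ hσ M hE) ψ⟩
  invFun Φ := ZOneM.liftCoinv σ Φ hσ hσ1 hE
  left_inv _ := CoinvT.addMonoidHom_ext π σ hσ M hσ1 <|
    ZOneM.liftCoinv_comp_univCocycle σ _ hσ hσ1 hE
  right_inv Φ := Subtype.ext <| funext <| ZOneM.liftCoinv_comp_univCocycle σ Φ hσ hσ1 hE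

def ZOneUnits.equivZOneM (M : Type) [AddCommGroup M] [DistribMulAction Δ M] (π : Γ₁ →* Δ)
    (A : Type) [CommRing A] : ZOneUnits M π A ≃ ZOneM M π (Additive Aˣ) where
  toFun Φ := ⟨fun g => AddMonoidHom.mk' (fun m => Additive.ofMul (Φ.1 g m)) (Φ.2.1 g), Φ.2.2⟩
  invFun Φ := ⟨fun g m => (Φ.1 g m).toMul, fun g => map_add (Φ.1 g), Φ.2⟩
  left_inv _ := rfl
  right_inv _ := rfl

theorem statement10_general
    (π : Γ₁ →* Δ)
    (σ : Δ → Γ₁) (hσ : ∀ c, π (σ c) = c) (hσ1 : σ 1 = 1)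
    [DistribMulAction Δ (EMod π)] (hE : EActionFormula π σ hσ)
    (M : Type) [AddCommGroup M] [DistribMulAction Δ M] :
    ∃ e : ∀ (A : Type) [CommRing A],
        (AddMonoidAlgebra ℤ (CoinvT M π) →+* A) ≃ ZOneUnits M π A,
      -- naturality in A:
      ∀ (A B : Type) [CommRing A] [CommRing B] (f : A →+* B)
          (χ : AddMonoidAlgebra ℤ (CoinvT M π) →+* A) (g : Γ₁) (m : M),
        ((e B (f.comp χ)).1 g m : B) = f (((e A χ).1 g m : A)) :=
  ⟨fun A _ => (groupAlgebraRingHomEquiv _ A).trans <|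
      (CoinvT.addMonoidHomEquivZOneM π σ hσ hσ1 hE M _).trans (ZOneUnits.equivZOneM M π A).symm,
    -- both sides unfold to `f (χ (single [c(g) ⊗ m] 1))`
    fun _ _ _ _ _ _ _ _ => rfl⟩

theorem statement10
    (π : Γ₁ →* Δ) (hπ : Function.Surjective π)
    (σ : Δ → Γ₁) (hσ : ∀ c, π (σ c) = c) (hσ1 : σ 1 = 1)
    [Fintype Δ]
    [DistribMulAction Δ (EMod π)] (hE : EActionFormula π σ hσ)
    (M : Type) [AddCommGroup M] [DistribMulAction Δ M] :
    ∃ e : ∀ (A : Type) [CommRing A],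
        (AddMonoidAlgebra ℤ (CoinvT M π) →+* A) ≃ ZOneUnits M π A,
      -- naturality in A:
      ∀ (A B : Type) [CommRing A] [CommRing B] (f : A →+* B)
          (χ : AddMonoidAlgebra ℤ (CoinvT M π) →+* A) (g : Γ₁) (m : M),
        ((e B (f.comp χ)).1 g m : B) = f (((e A χ).1 g m : A)) :=
  statement10_general π σ hσ hσ1 hE M

end Statement10
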